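/- Pullback criterion on polyhedral complexes: Let 𝒞', 𝒞 be polyhedral complexes in ℝ^{r'}, ℝ^r, Ω' ⊂ |𝒞'|, Ω ⊂ |𝒞| open, s_F : V' → V a smooth map between open neighbourhoods with s_F(Ω') ⊂ Ω, and L_F : ℝ^{r'} → ℝ^r linear. Suppose there are polyhedral complexes 𝒟', 𝒟 with Ω' ⊂ |𝒟'|, Ω ⊂ |𝒟| open, such that for every maximal σ' ∈ 𝒟' there exists a maximal σ ∈ 𝒟 with s_F(σ' ∩ Ω') ⊂ σ and L_F(L_{σ'}) ⊂ L_σ. Then for any superform β on an open neighbourhood W of Ω in ℝ^r whose restriction to Ω vanishes (i.e., β vanishes on all tuples of tangent vectors from L_σ at points of σ ∩ Ω, for all σ ∈ 𝒞), the pullback F*β := (s_F)* ⊗ (L_F)* (β) restricts to zero on Ω'. -/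

import Mathlib

open Set

noncomputable section

abbrev Vec (r : ℕ) : Type := Fin r → ℝ

/-- The data of a superform of bidegree `(p,q)` on `ℝ^r`: a pointwise evaluation
on `p` tangent vectors (the `d'`-block) and `q` tangent vectors (the `d''`-block). -/
abbrev SFd (r p q : ℕ) : Type :=
  Vec r → (Fin p → Vec r) → (Fin q → Vec r) → ℝ

/-- `g` is multilinear and alternating in its `n` vector arguments. -/
def IsAltML {r n : ℕ} (g : (Fin n → Vec r) → ℝ) : Prop :=
  (∀ (v : Fin n → Vec r) (i : Fin n) (x y : Vec r),
      g (Function.update v i (x + y)) =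
        g (Function.update v i x) + g (Function.update v i y)) ∧
  (∀ (v : Fin n → Vec r) (i : Fin n) (c : ℝ) (x : Vec r),
      g (Function.update v i (c • x)) = c * g (Function.update v i x)) ∧
  (∀ (v : Fin n → Vec r) (i j : Fin n), i ≠ j → v i = v j → g v = 0)

/-- `α` is a smooth superform of bidegree `(p,q)` on the set `U ⊆ ℝ^r`. -/
def IsSuperformOn {r p q : ℕ} (U : Set (Vec r)) (α : SFd r p q) : Prop :=
  (∀ x ∈ U, ∀ w, IsAltML fun v => α x v w) ∧
  (∀ x ∈ U, ∀ v, IsAltML fun w => α x v w) ∧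
  ∀ v w, ContDiffOn ℝ (⊤ : ℕ∞) (fun x => α x v w) U

/-- The differential `d'` of superforms, acting on the `d'`-block. -/
def dP {r p q : ℕ} (α : SFd r p q) : SFd r (p + 1) q := fun x v w =>
  ∑ i : Fin (p + 1),
    (-1 : ℝ) ^ (i : ℕ) * fderiv ℝ (fun y => α y (v ∘ i.succAbove) w) x (v i)

/-- The differential `d''` of superforms, acting on the `d''`-block,
with the sign `(-1)^p`. -/
def dPP {r p q : ℕ} (α : SFd r p q) : SFd r p (q + 1) := fun x v w =>
  (-1 : ℝ) ^ p * ∑ j : Fin (q + 1),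
    (-1 : ℝ) ^ (j : ℕ) * fderiv ℝ (fun y => α y v (w ∘ j.succAbove)) x (w j)

/-- A (convex) polyhedron in `ℝ^r`: a finite intersection of closed half-spaces. -/
def IsPolyhedron {r : ℕ} (σ : Set (Vec r)) : Prop :=
  ∃ (n : ℕ) (f : Fin n → (Vec r →ₗ[ℝ] ℝ)) (c : Fin n → ℝ),
    σ = {x | ∀ i, f i x ≤ c i}

/-- `τ` is a face of `σ`: either `σ` itself, or the subset of `σ` where a linear
functional bounded above on `σ` attains a given bound. -/
def IsFaceOf {r : ℕ} (τ σ : Set (Vec r)) : Prop :=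
  τ = σ ∨ ∃ (g : Vec r →ₗ[ℝ] ℝ) (c : ℝ),
    (∀ x ∈ σ, g x ≤ c) ∧ τ = {x ∈ σ | g x = c}

/-- A polyhedral complex in `ℝ^r`: a finite set of convex polyhedra, closed under
taking faces, such that the intersection of any two members is a face of both. -/
structure PolyComplex (r : ℕ) where
  polys : Set (Set (Vec r))
  finite : polys.Finite
  poly_mem : ∀ σ ∈ polys, IsPolyhedron σ
  face_mem : ∀ σ ∈ polys, ∀ τ, IsFaceOf τ σ → τ ∈ polys
  inter_face : ∀ σ ∈ polys, ∀ τ ∈ polys, IsFaceOf (σ ∩ τ) σ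

/-- The support of a polyhedral complex. -/
def PolyComplex.support {r : ℕ} (C : PolyComplex r) : Set (Vec r) :=
  ⋃ σ ∈ C.polys, σ

/-- The relative interior of a polyhedron: the polyhedron minus all its proper faces. -/
def relint {r : ℕ} (σ : Set (Vec r)) : Set (Vec r) :=
  {x ∈ σ | ∀ τ, IsFaceOf τ σ → τ ≠ σ → x ∉ τ}

/-- The polyhedral star of `σ` in `C`: the union of the relative interiors of all
members of `C` having `σ` as a face. -/
def polyStar {r : ℕ} (C : PolyComplex r) (σ : Set (Vec r)) : Set (Vec r) :=
  ⋃ τ ∈ {τ ∈ C.polys | IsFaceOf σ τ}, relint τ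

/-- `Ω` is an open subset of the support of `C` (subspace topology). -/
def OpenInSupport {r : ℕ} (C : PolyComplex r) (Ω : Set (Vec r)) : Prop :=
  ∃ U : Set (Vec r), IsOpen U ∧ Ω = U ∩ C.support

/-- `S` is star shaped with centre `z`. -/
def StarShapedWith {r : ℕ} (z : Vec r) (S : Set (Vec r)) : Prop :=
  ∀ x ∈ S, ∀ t ∈ Icc (0 : ℝ) 1, z + t • (x - z) ∈ S

/-- `Ω` is polyhedrally star shaped with centre `z`: there is a polyhedral complex `D`
such that `Ω` is an open subset of `|D|` and `σ ∩ Ω` is star shaped with centre `z`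
for every maximal `σ ∈ D`. -/
def PolyStarShaped {r : ℕ} (z : Vec r) (Ω : Set (Vec r)) : Prop :=
  ∃ D : PolyComplex r, OpenInSupport D Ω ∧
    ∀ σ ∈ D.polys, (∀ τ ∈ D.polys, IsFaceOf σ τ → τ = σ) →
      StarShapedWith z (σ ∩ Ω)

/-- Pullback of superforms along a pair `F = (s_F, L_F)`: the differential of the
smooth map `s_F` acts on the `d'`-block and the linear map `L_F` on the `d''`-block. -/
def pairPB {r' r p q : ℕ} (sF : Vec r' → Vec r) (LF : Vec r' → Vec r)
    (β : SFd r p q) : SFd r' p q := fun x v w =>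
  β (sF x) (fun i => fderiv ℝ sF x (v i)) (fun j => LF (w j))

/-- `β` restricts to zero on `Ω` with respect to the complex `C`: it vanishes on
tuples of tangent vectors from `L_σ` at points of `σ ∩ Ω`, for all `σ ∈ C`. -/
def RestrictsToZero {r p q : ℕ} (C : PolyComplex r) (Ω : Set (Vec r))
    (β : SFd r p q) : Prop :=
  ∀ σ ∈ C.polys, ∀ x ∈ σ ∩ Ω, ∀ (v : Fin p → Vec r) (w : Fin q → Vec r),
    (∀ i, v i ∈ vectorSpan ℝ σ) → (∀ j, w j ∈ vectorSpan ℝ σ) → β x v w = 0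

/-- `σ` is a maximal polyhedron of the complex `D`. -/
def IsMaximalIn {r : ℕ} (D : PolyComplex r) (σ : Set (Vec r)) : Prop :=
  σ ∈ D.polys ∧ ∀ τ ∈ D.polys, IsFaceOf σ τ → τ = σ

/-!
Vanishing on `Ω` can be tested with any complex exhibiting `Ω` as an open subset of its support.
Indeed, for a cell `σ` of one complex, the points of `σ ∩ Ω` near which `σ` lies in a single cell
`ρ` of the other complex are dense (finitely many closed sets covering a relatively open piece of
`σ` contain a relatively open piece of `σ` in one of them); at such points `L_σ ⊆ L_ρ`, and the
form is continuous. For the complexes `𝒟'`, `𝒟` the claim is pointwise: a point `x` of a cell of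
`𝒟'` lies in a maximal cell `σ'`, `s_F` maps a neighbourhood of `x` in `σ'` into a maximal `σ`, so
`d(s_F)_x` maps the tangent cone of `σ'` at `x`, which spans `L_σ'`, into the tangent cone of `σ`,
which spans a subspace of `L_σ`. So transfer `β` from `𝒞` to `𝒟`, pull back, and transfer `F*β`
from `𝒟'` back to `𝒞'`.
-/

open Filter Topology

section Topology

variable {X : Type*} [TopologicalSpace X]

theorem exists_nhds_inter_subset_of_subset_sUnion {P : Set (Set X)} (hP : P.Finite)
    (hclosed : ∀ ρ ∈ P, IsClosed ρ) {σ N : Set X} (hN : IsOpen N) (hne : (σ ∩ N).Nonempty)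
    (hcover : σ ∩ N ⊆ ⋃₀ P) : ∃ ρ ∈ P, ∃ y ∈ σ ∩ N, ∃ O ∈ 𝓝 y, σ ∩ O ⊆ ρ := by
  induction P, hP using Set.Finite.induction_on generalizing N with
  | empty => simpa using hcover hne.some_mem
  | @insert ρ₀ P _ _ ih =>
    by_cases hout : (σ ∩ (N \ ρ₀)).Nonempty
    · have hcover' : σ ∩ (N \ ρ₀) ⊆ ⋃₀ P := by
        rintro z ⟨hzσ, hzN, hzρ₀⟩
        obtain ⟨ρ, hρ, hzρ⟩ := hcover ⟨hzσ, hzN⟩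
        exact ⟨ρ, (mem_insert_iff.mp hρ).resolve_left (by rintro rfl; exact hzρ₀ hzρ), hzρ⟩
      obtain ⟨ρ, hρ, y, hy, O, hO, hσO⟩ :=
        ih (fun ρ hρ => hclosed ρ (mem_insert_of_mem _ hρ))
          (hN.sdiff (hclosed ρ₀ (mem_insert _ _))) hout hcover'
      exact ⟨ρ, mem_insert_of_mem _ hρ, y, ⟨hy.1, hy.2.1⟩, O, hO, hσO⟩
    · obtain ⟨y, hy⟩ := hne
      refine ⟨ρ₀, mem_insert _ _, y, hy, N, hN.mem_nhds hy.2, fun z hz => ?_⟩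
      by_contra hzρ₀
      exact hout ⟨z, hz.1, hz.2, hzρ₀⟩

theorem mem_closure_setOf_nhds_inter_subset {P : Set (Set X)} (hP : P.Finite)
    (hclosed : ∀ ρ ∈ P, IsClosed ρ) {σ U : Set X} (hU : IsOpen U) (hcover : σ ∩ U ⊆ ⋃₀ P)
    {x : X} (hx : x ∈ σ ∩ U) :
    x ∈ closure {y ∈ σ ∩ U | ∃ ρ ∈ P, ∃ O ∈ 𝓝 y, σ ∩ O ⊆ ρ} := by
  refine mem_closure_iff.mpr fun o ho hxo => ?_
  obtain ⟨ρ, hρ, y, ⟨hyσ, hyU, hyo⟩, O, hO, hσO⟩ :=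
    exists_nhds_inter_subset_of_subset_sUnion hP hclosed (hU.inter ho) ⟨x, hx.1, hx.2, hxo⟩
      (fun z hz => hcover ⟨hz.1, hz.2.1⟩)
  exact ⟨y, hyo, ⟨hyσ, hyU⟩, ρ, hρ, O, hO, hσO⟩

end Topology

section TangentCone

variable {E F : Type*} [NormedAddCommGroup E] [NormedSpace ℝ E]
  [NormedAddCommGroup F] [NormedSpace ℝ F]

theorem Convex.vectorSpan_le_span_tangentConeAt {s : Set E} (hs : Convex ℝ s) {y : E}
    (hy : y ∈ s) : vectorSpan ℝ s ≤ Submodule.span ℝ (tangentConeAt ℝ s y) := by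
  rw [vectorSpan_eq_span_vsub_set_right ℝ hy]
  refine Submodule.span_mono ?_
  rintro _ ⟨z, hz, rfl⟩
  exact mem_tangentConeAt_of_segment_subset (hs.segment_subset hy hz)

theorem tangentConeAt_subset_vectorSpan [FiniteDimensional ℝ F] {t : Set F} {z : F}
    (hz : z ∈ t) : tangentConeAt ℝ t z ⊆ vectorSpan ℝ t := by
  intro u hu
  obtain ⟨α, l, hl, c, d, -, hd, hcd⟩ := exists_fun_of_mem_tangentConeAt hu
  refine (Submodule.closed_of_finiteDimensional _).mem_of_tendsto hcd ?_
  filter_upwards [hd] with n hn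
  have : d n = (z + d n) -ᵥ z := by simp
  exact Submodule.smul_mem _ _ (this ▸ vsub_mem_vectorSpan ℝ hn hz)

theorem Convex.map_vectorSpan_le_of_hasFDerivWithinAt [FiniteDimensional ℝ F] {s O : Set E}
    (hs : Convex ℝ s) {y : E} (hy : y ∈ s) (hO : O ∈ 𝓝 y) {f : E → F} {f' : E →L[ℝ] F}
    (hf : HasFDerivWithinAt f f' (s ∩ O) y) {t : Set F} (hmaps : MapsTo f (s ∩ O) t) :
    (vectorSpan ℝ s).map (f' : E →ₗ[ℝ] F) ≤ vectorSpan ℝ t := by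
  have hyO : y ∈ s ∩ O := ⟨hy, mem_of_mem_nhds hO⟩
  rw [Submodule.map_le_iff_le_comap]
  calc vectorSpan ℝ s ≤ Submodule.span ℝ (tangentConeAt ℝ (s ∩ O) y) := by
        rw [tangentConeAt_inter_nhds hO]; exact hs.vectorSpan_le_span_tangentConeAt hy
    _ ≤ (vectorSpan ℝ (f '' (s ∩ O))).comap (f' : E →ₗ[ℝ] F) := by
        rw [Submodule.span_le]
        intro u hu
        exact tangentConeAt_subset_vectorSpan (mem_image_of_mem f hyO) (hf.mapsTo_tangent_cone hu)
    _ ≤ (vectorSpan ℝ t).comap (f' : E →ₗ[ℝ] F) :=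
        Submodule.comap_mono (vectorSpan_mono ℝ (image_subset_iff.mpr hmaps))

theorem Convex.vectorSpan_le_of_inter_nhds_subset [FiniteDimensional ℝ E] {s O t : Set E}
    (hs : Convex ℝ s) {y : E} (hy : y ∈ s) (hO : O ∈ 𝓝 y) (hst : s ∩ O ⊆ t) :
    vectorSpan ℝ s ≤ vectorSpan ℝ t := by
  simpa using hs.map_vectorSpan_le_of_hasFDerivWithinAt hy hO (hasFDerivWithinAt_id y _) hst

end TangentCone

section Superform

variable {r : ℕ}

def IsAltML.toMultilinearMap {n : ℕ} {g : (Fin n → Vec r) → ℝ} (hg : IsAltML g) :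
    MultilinearMap ℝ (fun _ : Fin n => Vec r) ℝ where
  toFun := g
  map_update_add' m i x y := by convert hg.1 m i x y
  map_update_smul' m i c x := by rw [smul_eq_mul]; convert hg.2.1 m i c x

theorem IsAltML.apply_eq_sum {n : ℕ} {g : (Fin n → Vec r) → ℝ} (hg : IsAltML g)
    (a : Fin n → Vec r) :
    g a = ∑ k : Fin n → Fin r, (∏ i, a i (k i)) * g (fun i => Pi.single (k i) 1) := by
  have ha : a = fun i => ∑ j : Fin r, a i j • (Pi.single j 1 : Vec r) := by
    funext i
    simp_rw [← Pi.single_smul', smul_eq_mul, mul_one, Finset.univ_sum_single]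
  calc g a = hg.toMultilinearMap (fun i => ∑ j : Fin r, a i j • (Pi.single j 1 : Vec r)) := by
        rw [← ha]; rfl
    _ = _ := by simp only [MultilinearMap.map_sum, MultilinearMap.map_smul_univ, smul_eq_mul]; rfl

theorem IsSuperformOn.continuousAt_comp {X : Type*} [TopologicalSpace X] {p q : ℕ}
    {U : Set (Vec r)} {β : SFd r p q} (hβ : IsSuperformOn U β) (hU : IsOpen U)
    {g : X → Vec r} {v : X → Fin p → Vec r} {w : X → Fin q → Vec r} {x : X}
    (hg : ContinuousAt g x) (hgx : g x ∈ U) (hv : ContinuousAt v x) (hw : ContinuousAt w x) :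
    ContinuousAt (fun y => β (g y) (v y) (w y)) x := by
  have hexpand : ∀ z ∈ U, ∀ a b, β z a b = ∑ k : Fin p → Fin r, ∑ l : Fin q → Fin r,
      (∏ i, a i (k i)) * ((∏ j, b j (l j)) *
        β z (fun i => Pi.single (k i) 1) (fun j => Pi.single (l j) 1)) := by
    intro z hz a b
    rw [(hβ.1 z hz b).apply_eq_sum a]
    simp_rw [(hβ.2.1 z hz _).apply_eq_sum b, Finset.mul_sum]
  have hcoeff : ∀ (k : Fin p → Fin r) (l : Fin q → Fin r), ContinuousAt
      (fun y => β (g y) (fun i => Pi.single (k i) 1) (fun j => Pi.single (l j) 1)) x :=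
    fun k l => ((hβ.2.2 _ _).continuousOn.continuousAt (hU.mem_nhds hgx)).comp hg
  have hsum : ContinuousAt (fun y => ∑ k : Fin p → Fin r, ∑ l : Fin q → Fin r,
      (∏ i, v y i (k i)) * ((∏ j, w y j (l j)) *
        β (g y) (fun i => Pi.single (k i) 1) (fun j => Pi.single (l j) 1))) x := by
    refine tendsto_finsetSum _ fun k _ => tendsto_finsetSum _ fun l _ => ?_
    refine (tendsto_finsetProd _ fun i _ => ?_).mul
      ((tendsto_finsetProd _ fun j _ => ?_).mul (hcoeff k l))
    · exact ((continuous_apply (k i)).comp (continuous_apply i)).continuousAt.comp hv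
    · exact ((continuous_apply (l j)).comp (continuous_apply j)).continuousAt.comp hw
  refine hsum.congr ?_
  filter_upwards [hg.preimage_mem_nhds (hU.mem_nhds hgx)] with y hy
  exact (hexpand _ hy _ _).symm

end Superform

section PolyComplex

variable {r : ℕ}

theorem IsPolyhedron.convex {σ : Set (Vec r)} (hσ : IsPolyhedron σ) : Convex ℝ σ := by
  obtain ⟨n, f, c, rfl⟩ := hσ
  rw [ofPred_forall]
  exact convex_iInter fun i => convex_halfSpace_le (f i).isLinear (c i)

theorem IsPolyhedron.isClosed {σ : Set (Vec r)} (hσ : IsPolyhedron σ) : IsClosed σ := by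
  obtain ⟨n, f, c, rfl⟩ := hσ
  rw [ofPred_forall]
  exact isClosed_iInter fun i =>
    isClosed_le (f i).continuous_of_finiteDimensional continuous_const

theorem IsFaceOf.subset {τ σ : Set (Vec r)} (h : IsFaceOf τ σ) : τ ⊆ σ := by
  rcases h with rfl | ⟨g, c, -, rfl⟩
  exacts [subset_rfl, sep_subset _ _]

theorem PolyComplex.support_eq_sUnion (C : PolyComplex r) : C.support = ⋃₀ C.polys :=
  sUnion_eq_biUnion.symm

theorem PolyComplex.subset_support (C : PolyComplex r) {σ : Set (Vec r)} (hσ : σ ∈ C.polys) :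
    σ ⊆ C.support :=
  subset_biUnion_of_mem (u := id) hσ

theorem OpenInSupport.subset_support {C : PolyComplex r} {Ω : Set (Vec r)}
    (hΩ : OpenInSupport C Ω) : Ω ⊆ C.support := by
  obtain ⟨U, -, rfl⟩ := hΩ
  exact inter_subset_right

theorem PolyComplex.exists_isMaximalIn_superset (D : PolyComplex r) {τ : Set (Vec r)}
    (hτ : τ ∈ D.polys) : ∃ σ, IsMaximalIn D σ ∧ τ ⊆ σ := by
  obtain ⟨σ, ⟨hσ, hτσ⟩, hmax⟩ := Set.Finite.exists_maximalFor id {s ∈ D.polys | τ ⊆ s}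
    (D.finite.subset (sep_subset _ _)) ⟨τ, hτ, subset_rfl⟩
  refine ⟨σ, ⟨hσ, fun ρ hρ hσρ => ?_⟩, hτσ⟩
  exact (hmax ⟨hρ, hτσ.trans hσρ.subset⟩ hσρ.subset).antisymm hσρ.subset

end PolyComplex

theorem RestrictsToZero.of_openInSupport {r p q : ℕ} {C D : PolyComplex r} {Ω : Set (Vec r)}
    {β : SFd r p q} (hβ : RestrictsToZero C Ω β) (hΩC : Ω ⊆ C.support)
    (hΩD : OpenInSupport D Ω) (hcont : ∀ v w, ∀ x ∈ Ω, ContinuousAt (fun y => β y v w) x) :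
    RestrictsToZero D Ω β := by
  obtain ⟨U, hU, rfl⟩ := hΩD
  rintro σ hσ x ⟨hxσ, hxU, -⟩ v w hv hw
  have hσU : σ ∩ U ⊆ U ∩ D.support := fun y hy => ⟨hy.2, D.subset_support hσ hy.1⟩
  have hdense := mem_closure_setOf_nhds_inter_subset C.finite
    (fun ρ hρ => (C.poly_mem ρ hρ).isClosed) hU
    (C.support_eq_sUnion ▸ hσU.trans hΩC) ⟨hxσ, hxU⟩
  have hvanish : MapsTo (fun y => β y v w)
      {y ∈ σ ∩ U | ∃ ρ ∈ C.polys, ∃ O ∈ 𝓝 y, σ ∩ O ⊆ ρ} {0} := by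
    rintro y ⟨hy, ρ, hρ, O, hO, hσO⟩
    have hspan := (D.poly_mem σ hσ).convex.vectorSpan_le_of_inter_nhds_subset hy.1 hO hσO
    exact hβ ρ hρ y ⟨hσO ⟨hy.1, mem_of_mem_nhds hO⟩, hσU hy⟩ v w
      (fun i => hspan (hv i)) (fun j => hspan (hw j))
  simpa using
    (hcont v w x ⟨hxU, D.subset_support hσ hxσ⟩).continuousWithinAt.mem_closure hdense hvanish

theorem RestrictsToZero.pairPB {r' r p q : ℕ} {D' : PolyComplex r'} {D : PolyComplex r}
    {Ω' : Set (Vec r')} {Ω : Set (Vec r)} {β : SFd r p q} (hβ : RestrictsToZero D Ω β)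
    (hΩ' : OpenInSupport D' Ω') {sF : Vec r' → Vec r}
    (hsF : ∀ x ∈ Ω', DifferentiableAt ℝ sF x) (hmaps : sF '' Ω' ⊆ Ω) {LF : Vec r' → Vec r}
    (hcond : ∀ σ', IsMaximalIn D' σ' → ∃ σ, IsMaximalIn D σ ∧
      sF '' (σ' ∩ Ω') ⊆ σ ∧ ∀ u ∈ vectorSpan ℝ σ', LF u ∈ vectorSpan ℝ σ) :
    RestrictsToZero D' Ω' (pairPB sF LF β) := by
  obtain ⟨U, hU, rfl⟩ := hΩ'
  intro τ hτ x hx v w hv hw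
  obtain ⟨σ', hσ', hτσ'⟩ := D'.exists_isMaximalIn_superset hτ
  obtain ⟨σ, hσ, himage, hLF⟩ := hcond σ' hσ'
  have hxσ' : x ∈ σ' := hτσ' hx.1
  have hspan : vectorSpan ℝ τ ≤ vectorSpan ℝ σ' := vectorSpan_mono ℝ hτσ'
  have hmapsσ : MapsTo sF (σ' ∩ U) σ := fun y hy =>
    himage ⟨y, ⟨hy.1, hy.2, D'.subset_support hσ'.1 hy.1⟩, rfl⟩
  have hdiff := (D'.poly_mem σ' hσ'.1).convex.map_vectorSpan_le_of_hasFDerivWithinAt hxσ'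
    (hU.mem_nhds hx.2.1) (hsF x hx.2).hasFDerivAt.hasFDerivWithinAt hmapsσ
  exact hβ σ hσ.1 (sF x) ⟨himage ⟨x, ⟨hxσ', hx.2⟩, rfl⟩, hmaps ⟨x, hx.2, rfl⟩⟩ _ _
    (fun i => hdiff ⟨v i, hspan (hv i), rfl⟩) (fun j => hLF _ (hspan (hw j)))

theorem pullback_criterion_general {r' r p q : ℕ}
    (C' : PolyComplex r') (C : PolyComplex r)
    (D' : PolyComplex r') (D : PolyComplex r)
    (Ω' : Set (Vec r')) (Ω : Set (Vec r))
    (hΩ'C' : OpenInSupport C' Ω') (hΩC : OpenInSupport C Ω)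
    (hΩ'D' : OpenInSupport D' Ω') (hΩD : OpenInSupport D Ω)
    (V' : Set (Vec r')) (hV' : IsOpen V') (hΩ'V' : Ω' ⊆ V')
    (sF : Vec r' → Vec r) (hsF : ContDiffOn ℝ (⊤ : ℕ∞) sF V')
    (hmaps : sF '' Ω' ⊆ Ω)
    (LF : Vec r' →ₗ[ℝ] Vec r)
    (hcond : ∀ σ', IsMaximalIn D' σ' → ∃ σ, IsMaximalIn D σ ∧
      sF '' (σ' ∩ Ω') ⊆ σ ∧ ∀ u ∈ vectorSpan ℝ σ', LF u ∈ vectorSpan ℝ σ)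
    (W : Set (Vec r)) (hW : IsOpen W) (hΩW : Ω ⊆ W)
    (β : SFd r p q) (hβ : IsSuperformOn W β)
    (hzero : RestrictsToZero C Ω β) :
    RestrictsToZero C' Ω' (pairPB sF (fun y => LF y) β) := by
  have hβD : RestrictsToZero D Ω β := hzero.of_openInSupport hΩC.subset_support hΩD
    fun v w y hy => (hβ.2.2 v w).continuousOn.continuousAt (hW.mem_nhds (hΩW hy))
  have hsmooth : ∀ x ∈ Ω', ContDiffAt ℝ (⊤ : ℕ∞) sF x := fun x hx =>
    hsF.contDiffAt (hV'.mem_nhds (hΩ'V' hx))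
  refine (hβD.pairPB hΩ'D' (fun x hx => (hsmooth x hx).differentiableAt (by simp)) hmaps
    hcond).of_openInSupport hΩ'D'.subset_support hΩ'C' fun v w x hx => ?_
  have hfderiv : ContinuousAt (fderiv ℝ sF) x :=
    ((hsmooth x hx).fderiv_right (m := 0) (by simp)).continuousAt
  exact hβ.continuousAt_comp hW (hsmooth x hx).continuousAt (hΩW (hmaps ⟨x, hx, rfl⟩))
    (by fun_prop) continuousAt_const

/-- Pullback criterion: with `Ω' ⊆ |𝒞'|`, `Ω ⊆ |𝒞|` open,
`s_F` smooth near `Ω'` with `s_F(Ω') ⊆ Ω` and `L_F` linear, if there are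
complexes `𝒟'`, `𝒟` with `Ω'`, `Ω` open in their supports such that every
maximal `σ' ∈ 𝒟'` admits a maximal `σ ∈ 𝒟` with `s_F(σ' ∩ Ω') ⊆ σ` and
`L_F(L_{σ'}) ⊆ L_σ`, then for every superform `β` on an open neighbourhood `W`
of `Ω` with `W ∩ |𝒞| = Ω` whose restriction to `Ω` vanishes, the pullback
`F*β = (s_F)* ⊗ (L_F)* (β)` restricts to zero on `Ω'`. -/
theorem pullback_criterion {r' r p q : ℕ}
    (C' : PolyComplex r') (C : PolyComplex r)
    (D' : PolyComplex r') (D : PolyComplex r)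
    (Ω' : Set (Vec r')) (Ω : Set (Vec r))
    (hΩ'C' : OpenInSupport C' Ω') (hΩC : OpenInSupport C Ω)
    (hΩ'D' : OpenInSupport D' Ω') (hΩD : OpenInSupport D Ω)
    (V' : Set (Vec r')) (hV' : IsOpen V') (hΩ'V' : Ω' ⊆ V')
    (sF : Vec r' → Vec r) (hsF : ContDiffOn ℝ (⊤ : ℕ∞) sF V')
    (hmaps : sF '' Ω' ⊆ Ω)
    (LF : Vec r' →ₗ[ℝ] Vec r)
    (hcond : ∀ σ', IsMaximalIn D' σ' → ∃ σ, IsMaximalIn D σ ∧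
      sF '' (σ' ∩ Ω') ⊆ σ ∧ ∀ u ∈ vectorSpan ℝ σ', LF u ∈ vectorSpan ℝ σ)
    (W : Set (Vec r)) (hW : IsOpen W) (hΩW : Ω ⊆ W) (hWΩ : W ∩ C.support = Ω)
    (β : SFd r p q) (hβ : IsSuperformOn W β)
    (hzero : RestrictsToZero C Ω β) :
    RestrictsToZero C' Ω' (pairPB sF (fun y => LF y) β) :=
  pullback_criterion_general C' C D' D Ω' Ω hΩ'C' hΩC hΩ'D' hΩD V' hV' hΩ'V' sF hsF hmaps LF hcond W
    hW hΩW β hβ hzero
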